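/- arXiv:2510.17135 — 4 statements merged into one kernel-verified Lean document; each statement's English description precedes it below -/
import Mathlib

section
/- For every partition μ of n, the valency v_μ = 2^n n! / (∏_i m_i! (2μ_i)^{m_i}) satisfies 1 ≤ v_μ ≤ (2n-2)!!, where μ has distinct part sizes μ_i with multiplicities m_i. Moreover the maximum (2n-2)!! is attained exactly when μ = [n], and the minimum 1 is attained for μ = [1^n]. -/
/-- The valency `v_μ = 2^n n! / ∏_i m_i! (2μ_i)^{m_i}` of the associate `A_μ` of the
perfect matching association scheme, for a partition with multiset of parts `P`. -/
noncomputable def valency (n : ℕ) (P : Multiset ℕ) : ℚ :=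
  (2 ^ n * n.factorial : ℚ) /
    ∏ a ∈ P.toFinset, (((P.count a).factorial : ℚ) * (2 * (a : ℚ)) ^ (P.count a))



/-- Product of factorials is at most factorial of sum. -/
lemma prod_factorial_le' {α : Type*} [DecidableEq α] (s : Finset α) (f : α → ℕ) :
    ∏ i ∈ s, (f i).factorial ≤ (∑ i ∈ s, f i).factorial := by
  induction s using Finset.cons_induction with
  | empty => simp
  | cons a s ha ih =>
      rw [Finset.prod_cons, Finset.sum_cons]
      calc (f a).factorial * ∏ i ∈ s, (f i).factorial
          ≤ (f a).factorial * (∑ i ∈ s, f i).factorial := Nat.mul_le_mul_left _ ih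
        _ ≤ (f a + ∑ i ∈ s, f i).factorial :=
            Nat.le_of_dvd (Nat.factorial_pos _)
              (Nat.factorial_mul_factorial_dvd_factorial_add _ _)

lemma factorial_mul_pow_le (a : ℕ) (ha : 1 ≤ a) :
    ∀ m : ℕ, m.factorial * a ^ m ≤ (a * m).factorial := by
  obtain ⟨b, rfl⟩ : ∃ b, a = b + 1 := ⟨a - 1, by omega⟩
  intro m
  induction m with
  | zero => simp
  | succ m ih =>
      have h1 : ((b+1) * (m+1)).factorial = ((b+1)*m + b + 1) * ((b+1)*m + b).factorial := by
        rw [show (b+1)*(m+1) = ((b+1)*m + b) + 1 by ring, Nat.factorial_succ]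
      have h2 : ((b+1)*m).factorial ≤ ((b+1)*m + b).factorial :=
        Nat.factorial_le (by omega)
      calc (m+1).factorial * (b+1) ^ (m+1)
          = ((b+1)*m + b + 1) * (m.factorial * (b+1) ^ m) := by
            rw [Nat.factorial_succ]; ring
        _ ≤ ((b+1)*m + b + 1) * ((b+1)*m).factorial := Nat.mul_le_mul_left _ ih
        _ ≤ ((b+1)*m + b + 1) * ((b+1)*m + b).factorial := Nat.mul_le_mul_left _ h2
        _ = ((b+1) * (m+1)).factorial := h1.symm

def den (P : Multiset ℕ) : ℕ :=
  ∏ a ∈ P.toFinset, (P.count a).factorial * (2 * a) ^ (P.count a)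

lemma sum_toFinset (P : Multiset ℕ) :
    ∑ a ∈ P.toFinset, a * P.count a = P.sum := by
  have := Finset.sum_multiset_map_count P (id : ℕ → ℕ)
  rw [Multiset.map_id] at this
  rw [this]
  refine Finset.sum_congr rfl fun a _ => ?_
  simp [mul_comm]

lemma den_le (P : Multiset ℕ) (hpos : ∀ x ∈ P, 1 ≤ x) :
    den P ≤ 2 ^ P.sum * (P.sum).factorial := by
  classical
  calc den P ≤ ∏ a ∈ P.toFinset, 2 ^ (a * P.count a) * (a * P.count a).factorial := by
        refine Finset.prod_le_prod' fun a haF => ?_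
        have ha : 1 ≤ a := hpos a (Multiset.mem_toFinset.mp haF)
        set m := P.count a
        have h1 : (2*a) ^ m = 2 ^ m * a ^ m := by rw [mul_pow]
        have h2 : (2:ℕ) ^ m ≤ 2 ^ (a * m) := Nat.pow_le_pow_right (by norm_num) (by nlinarith)
        calc m.factorial * (2*a)^m = 2 ^ m * (m.factorial * a ^ m) := by rw [h1]; ring
          _ ≤ 2 ^ (a*m) * (m.factorial * a ^ m) := Nat.mul_le_mul_right _ h2
          _ ≤ 2 ^ (a*m) * (a*m).factorial :=
              Nat.mul_le_mul_left _ (by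
                have := @factorial_mul_pow_le a ha m
                exact this)
    _ = 2 ^ (∑ a ∈ P.toFinset, a * P.count a) *
          ∏ a ∈ P.toFinset, (a * P.count a).factorial := by
        rw [Finset.prod_mul_distrib, Finset.prod_pow_eq_pow_sum]
    _ ≤ 2 ^ P.sum * (P.sum).factorial := by
        rw [sum_toFinset]
        exact Nat.mul_le_mul_left _ (by
          have := prod_factorial_le' P.toFinset (fun a => a * P.count a)
          rwa [sum_toFinset] at this)
lemma two_mul_sum_le (P : Multiset ℕ) (hpos : ∀ x ∈ P, 1 ≤ x) :
    2 * P.sum ≤ (P.map (fun x => 2 * x)).prod := by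
  induction P using Multiset.induction with
  | empty => simp
  | cons a P ih =>
      have ha : 1 ≤ a := hpos a (Multiset.mem_cons_self a P)
      have hpos' : ∀ x ∈ P, 1 ≤ x := fun x hx => hpos x (Multiset.mem_cons_of_mem hx)
      rcases eq_or_ne P 0 with rfl | hP
      · simp
      · obtain ⟨b, hb⟩ := Multiset.exists_mem_of_ne_zero hP
        have hs : 1 ≤ P.sum :=
          le_trans (hpos' b hb) (Multiset.single_le_sum (fun x _ => Nat.zero_le x) b hb)
        have ihp := ih hpos'
        rw [Multiset.map_cons, Multiset.prod_cons, Multiset.sum_cons]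
        calc 2 * (a + P.sum) ≤ (2 * a) * (2 * P.sum) := by nlinarith
          _ ≤ (2 * a) * (P.map (fun x => 2 * x)).prod := Nat.mul_le_mul_left _ ihp

lemma two_mul_sum_lt (P : Multiset ℕ) (hpos : ∀ x ∈ P, 1 ≤ x)
    (hcard : 2 ≤ Multiset.card P) (hsum : 3 ≤ P.sum) :
    2 * P.sum < (P.map (fun x => 2 * x)).prod := by
  have hne : P ≠ 0 := by rintro rfl; simp at hcard
  obtain ⟨a, haP⟩ := Multiset.exists_mem_of_ne_zero hne
  obtain ⟨R, rfl⟩ := Multiset.exists_cons_of_mem haP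
  have ha : 1 ≤ a := hpos a (Multiset.mem_cons_self a R)
  have hposR : ∀ x ∈ R, 1 ≤ x := fun x hx => hpos x (Multiset.mem_cons_of_mem hx)
  have hRne : R ≠ 0 := by
    rintro rfl; simp at hcard
  obtain ⟨b, hb⟩ := Multiset.exists_mem_of_ne_zero hRne
  have hs : 1 ≤ R.sum :=
    le_trans (hposR b hb) (Multiset.single_le_sum (fun x _ => Nat.zero_le x) b hb)
  have hQR := two_mul_sum_le R hposR
  rw [Multiset.map_cons, Multiset.prod_cons, Multiset.sum_cons]
  have hsum' : 3 ≤ a + R.sum := by simpa using hsum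
  have key : 2 * (a + R.sum) < (2 * a) * (2 * R.sum) := by nlinarith
  calc 2 * (a + R.sum) < (2 * a) * (2 * R.sum) := key
    _ ≤ (2 * a) * (R.map (fun x => 2 * x)).prod := Nat.mul_le_mul_left _ hQR

lemma le_den (P : Multiset ℕ) :
    (P.map (fun x => 2 * x)).prod ≤ den P := by
  rw [Finset.prod_multiset_map_count, den]
  exact Finset.prod_le_prod' fun a _ =>
    Nat.le_mul_of_pos_left _ (Nat.factorial_pos _)

lemma den_singleton (n : ℕ) : den {n} = 2 * n := by
  simp [den]

lemma den_replicate (n : ℕ) (hn : n ≠ 0) :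
    den (Multiset.replicate n 1) = n.factorial * 2 ^ n := by
  rw [den, Multiset.toFinset_replicate, if_neg hn]
  simp [Multiset.count_replicate]

lemma den_pos (P : Multiset ℕ) (hpos : ∀ x ∈ P, 1 ≤ x) : 0 < den P := by
  rw [den]
  refine Finset.prod_pos fun a haF => ?_
  have ha : 1 ≤ a := hpos a (Multiset.mem_toFinset.mp haF)
  positivity

lemma den_cast (P : Multiset ℕ) :
    ((den P : ℕ) : ℚ)
      = ∏ a ∈ P.toFinset, (((P.count a).factorial : ℚ) * (2 * (a : ℚ)) ^ (P.count a)) := by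
  rw [den]
  push_cast
  rfl

lemma valency_bounds_aux (n : ℕ) (hn : 2 ≤ n) (P : Multiset ℕ)
    (hpos : ∀ x ∈ P, 1 ≤ x) (hsum : P.sum = n) :
    1 ≤ valency n P ∧
    valency n P ≤ 2 ^ (n - 1) * ((n - 1).factorial : ℚ) ∧
    (valency n P = 2 ^ (n - 1) * ((n - 1).factorial : ℚ) ↔ P = {n}) ∧
    (P = Multiset.replicate n 1 → valency n P = 1) := by
  have hd_pos : 0 < den P := den_pos P hpos
  have hdQ : (0:ℚ) < (den P : ℚ) := by exact_mod_cast hd_pos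
  have hval : valency n P = (2 ^ n * n.factorial : ℚ) / (den P : ℚ) := by
    rw [valency, den_cast]
  have hfac : (n.factorial : ℚ) = n * ((n-1).factorial : ℚ) := by
    exact_mod_cast (Nat.mul_factorial_pred (by omega)).symm
  have hB : (2:ℚ) ^ (n-1) * ((n-1).factorial : ℚ) * (2 * n) = 2 ^ n * n.factorial := by
    rw [hfac, show (2:ℚ)^n = 2^(n-1) * 2 by rw [← pow_succ]; congr 1; omega]
    ring
  have hBpos : (0:ℚ) < 2 ^ (n-1) * ((n-1).factorial : ℚ) := by positivity
  have h2n_le : 2 * n ≤ den P := by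
    calc 2 * n = 2 * P.sum := by rw [hsum]
      _ ≤ (P.map (fun x => 2 * x)).prod := two_mul_sum_le P hpos
      _ ≤ den P := le_den P
  refine ⟨?_, ?_, ?_, ?_⟩
  · -- 1 ≤ valency
    rw [hval, le_div_iff₀ hdQ, one_mul]
    have : den P ≤ 2 ^ n * n.factorial := by
      have := den_le P hpos
      rwa [hsum] at this
    exact_mod_cast this
  · -- upper bound
    rw [hval, div_le_iff₀ hdQ]
    calc (2:ℚ) ^ n * n.factorial = 2 ^ (n-1) * ((n-1).factorial : ℚ) * (2 * n) := hB.symm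
      _ ≤ 2 ^ (n-1) * ((n-1).factorial : ℚ) * (den P : ℚ) := by
          have : ((2 * n : ℕ) : ℚ) ≤ (den P : ℚ) := by exact_mod_cast h2n_le
          push_cast at this
          exact mul_le_mul_of_nonneg_left this hBpos.le
  · -- equality iff
    rw [hval, div_eq_iff hdQ.ne']
    constructor
    · intro h
      have hden : den P = 2 * n := by
        have h' : (2:ℚ) ^ (n-1) * ((n-1).factorial : ℚ) * (2 * n)
            = 2 ^ (n-1) * ((n-1).factorial : ℚ) * (den P : ℚ) := by
          rw [hB, h]
        have h'' : ((2 * n : ℕ) : ℚ) = (den P : ℚ) := by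
          have := mul_left_cancel₀ hBpos.ne' h'
          push_cast
          linarith [this]
        exact_mod_cast h''.symm
      -- now show P = {n}
      have hPne : P ≠ 0 := by
        intro h0
        rw [h0] at hsum
        simp at hsum
        omega
      have hcard1 : Multiset.card P = 1 := by
        by_contra hc
        have hc2 : 2 ≤ Multiset.card P := by
          have : 1 ≤ Multiset.card P := by
            rwa [Nat.one_le_iff_ne_zero, ne_eq, Multiset.card_eq_zero]
          omega
        rcases Nat.lt_or_ge n 3 with h3 | h3
        · -- n = 2, P = replicate 2 1
          have hn2 : n = 2 := by omega
          have hall1 : ∀ b ∈ P, b = 1 := by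
            intro b hb
            obtain ⟨R, hR⟩ := Multiset.exists_cons_of_mem hb
            have hRne : R ≠ 0 := by
              intro h0
              rw [hR, h0] at hc2
              simp at hc2
            obtain ⟨c, hc'⟩ := Multiset.exists_mem_of_ne_zero hRne
            have hcP : c ∈ P := by rw [hR]; exact Multiset.mem_cons_of_mem hc'
            have hcR : 1 ≤ R.sum :=
              le_trans (hpos c hcP)
                (Multiset.single_le_sum (fun x _ => Nat.zero_le x) c hc')
            have hb1 : 1 ≤ b := hpos b hb
            rw [hR, Multiset.sum_cons] at hsum
            omega
          have hrep : P = Multiset.replicate (Multiset.card P) 1 :=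
            Multiset.eq_replicate_card.mpr hall1
          have hcardsum : P.sum = Multiset.card P := by
            conv_lhs => rw [hrep]
            simp [Multiset.sum_replicate]
          have hcP : Multiset.card P = 2 := by omega
          rw [hcP] at hrep
          rw [hrep, den_replicate 2 (by norm_num)] at hden
          simp [Nat.factorial] at hden
          omega
        · -- n ≥ 3 : strict inequality
          have hlt : 2 * P.sum < (P.map (fun x => 2 * x)).prod :=
            two_mul_sum_lt P hpos hc2 (by omega)
          have := le_den P
          rw [hsum] at hlt
          omega
      obtain ⟨a, ha⟩ := Multiset.card_eq_one.mp hcard1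
      have : a = n := by
        rw [ha] at hsum
        simpa using hsum
      rw [ha, this]
    · intro h
      rw [h, den_singleton]
      push_cast
      rw [show (2:ℚ)^n = 2^(n-1) * 2 by rw [← pow_succ]; congr 1; omega, hfac]
      ring
  · -- replicate case
    intro h
    have hd : den P = n.factorial * 2 ^ n := by
      rw [h, den_replicate n (by omega)]
    rw [hval, hd, div_eq_one_iff_eq]
    · push_cast; ring
    · rw [hd] at hdQ
      exact_mod_cast hdQ.ne'


/-- For every partition `μ` of `n ≥ 2`, the valency satisfies `1 ≤ v_μ ≤ (2n-2)!!`,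
the maximum `(2n-2)!! = 2^{n-1}(n-1)!` being attained exactly for `μ = [n]` and the
minimum `1` being attained for `μ = [1^n]`. -/
theorem valency_bounds (n : ℕ) (hn : 2 ≤ n) (μ : Nat.Partition n) :
    1 ≤ valency n μ.parts ∧
    valency n μ.parts ≤ 2 ^ (n - 1) * ((n - 1).factorial : ℚ) ∧
    (valency n μ.parts = 2 ^ (n - 1) * ((n - 1).factorial : ℚ) ↔ μ.parts = {n}) ∧
    (μ.parts = Multiset.replicate n 1 → valency n μ.parts = 1) := by
  exact valency_bounds_aux n hn μ.parts (fun x hx => μ.parts_pos hx) μ.parts_sum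
end

section
/- For every partition λ of 2n (with 2n boxes), the sum of contents of its Young diagram is at least -n^2 + 2n, i.e., p_1(λ) ≥ -n^2 + 2n, with the minimum attained at λ = [2^n]. -/
/-!
Peeling off the first row gives `contentSum (a :: L) = (0 + ⋯ + (a - 1)) + contentSum L - L.sum`,
since every cell of the remaining rows moves one row down. By induction this yields
`4 s - s² ≤ 4 · contentSum L` for any list of rows of length at least `2` and total size `s`,
the inductive step reducing to `(a - 2) (3a + 2s) ≥ 0`. For `s = 2n` this is the bound, and
`[2^n]` attains it by the same recursion.
-/

/-- The sum of contents `j - i` (0-indexed) over the cells of the Young diagram whose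
row lengths are given by the list `L`. -/
def contentSum (L : List ℕ) : ℤ :=
  ∑ i ∈ Finset.range L.length, ∑ j ∈ Finset.range (L.getD i 0), ((j : ℤ) - (i : ℤ))

open Finset

lemma List.sum_range_length_getD (L : List ℕ) :
    ∑ i ∈ Finset.range L.length, L.getD i 0 = L.sum := by
  induction L with
  | nil => simp
  | cons a L ih => simpa [Finset.sum_range_succ', add_comm] using ih

lemma contentSum_cons (a : ℕ) (L : List ℕ) :
    contentSum (a :: L) = ∑ j ∈ range a, (j : ℤ) + contentSum L - L.sum := by
  have shift : ∀ i ∈ range L.length,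
      ∑ j ∈ range (L.getD i 0), ((j : ℤ) - (i + 1 : ℕ))
        = ∑ j ∈ range (L.getD i 0), ((j : ℤ) - i) - L.getD i 0 := by
    intro i _
    simp only [Nat.cast_add, Nat.cast_one, ← sub_sub, sum_sub_distrib, sum_const, card_range,
      nsmul_eq_mul, mul_one]
  rw [contentSum, contentSum, List.length_cons, sum_range_succ']
  simp only [List.getD_cons_succ, List.getD_cons_zero, Nat.cast_zero, sub_zero]
  rw [sum_congr rfl shift, sum_sub_distrib, ← Nat.cast_sum, List.sum_range_length_getD]
  ring

lemma four_mul_sum_sub_sq_le_four_mul_contentSum (L : List ℕ) (hL : ∀ a ∈ L, 2 ≤ a) :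
    4 * (L.sum : ℤ) - (L.sum : ℤ) ^ 2 ≤ 4 * contentSum L := by
  induction L with
  | nil => simp [contentSum]
  | cons a L ih =>
    have ha : (2 : ℤ) ≤ a := by exact_mod_cast hL a List.mem_cons_self
    have gauss : (∑ j ∈ range a, (j : ℤ)) * 2 = a * (a - 1) := by
      have := congrArg (Nat.cast (R := ℤ)) (sum_range_id_mul_two a)
      push_cast [Nat.cast_sub (by omega : 1 ≤ a)] at this
      exact this
    have ih := ih fun b hb => hL b (List.mem_cons_of_mem a hb)
    have hs : (0 : ℤ) ≤ L.sum := by positivity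
    rw [contentSum_cons, List.sum_cons, Nat.cast_add]
    nlinarith [mul_nonneg (sub_nonneg.mpr ha) (by positivity : (0 : ℤ) ≤ 3 * a + 2 * L.sum)]

lemma contentSum_replicate_two (n : ℕ) :
    contentSum (List.replicate n 2) = -(n : ℤ) ^ 2 + 2 * n := by
  induction n with
  | zero => rfl
  | succ n ih =>
    rw [List.replicate_succ, contentSum_cons, ih, List.sum_replicate, sum_range_succ,
      sum_range_one, smul_eq_mul]
    push_cast
    ring

/-- For every even partition `2μ` of `2n`, the content sum of its Young diagram is at least
`-n^2 + 2n`, with the minimum attained at `λ = [2^n]`. -/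
theorem contentSum_ge (n : ℕ) (μ : Nat.Partition n) :
    -(n : ℤ) ^ 2 + 2 * n
        ≤ contentSum (((μ.parts.map (fun a => 2 * a)).sort (· ≤ ·)).reverse) ∧
    contentSum (List.replicate n 2) = -(n : ℤ) ^ 2 + 2 * n := by
  set L := ((μ.parts.map (fun a => 2 * a)).sort (· ≤ ·)).reverse
  have two_le : ∀ a ∈ L, 2 ≤ a := by
    intro a ha
    simp only [L, List.mem_reverse, Multiset.mem_sort, Multiset.mem_map] at ha
    obtain ⟨b, hb, rfl⟩ := ha
    have := μ.parts_pos hb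
    omega
  have sum_eq : L.sum = 2 * n := by
    rw [List.sum_reverse, ← Multiset.sum_coe, Multiset.sort_eq, Multiset.sum_map_mul_left,
      Multiset.map_id', μ.parts_sum]
  have bound := four_mul_sum_sub_sq_le_four_mul_contentSum L two_le
  rw [sum_eq] at bound
  push_cast at bound
  exact ⟨by nlinarith, contentSum_replicate_two n⟩
end

section
/- For every partition λ of 2n of the form 2μ where μ is a partition of n whose largest part exceeds n/2, the content sum p_1(2μ) is strictly greater than n^2/4. -/
lemma two_mul_sum_range_intCast (m : ℕ) :
    2 * ∑ j ∈ Finset.range m, (j : ℤ) = m * (m - 1) := by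
  have h := Finset.sum_range_id_mul_two m
  rcases m with _ | m
  · simp
  · push_cast [Nat.cast_sum] at h ⊢
    simpa [mul_comm] using congrArg (fun k : ℕ => (k : ℤ)) h

lemma sum_range_length_getD (r : List ℕ) :
    ∑ i ∈ Finset.range r.length, (r.getD i 0 : ℤ) = r.sum := by
  induction r with
  | nil => simp
  | cons x r ih =>
    rw [List.length_cons, Finset.sum_range_succ']
    simp only [List.getD_cons_succ, List.getD_cons_zero, ih, List.sum_cons, Nat.cast_add]
    ring

lemma two_mul_contentSum_cons (x : ℕ) (r : List ℕ) :
    2 * contentSum (x :: r) = x * (x - 1) + 2 * (contentSum r - r.sum) := by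
  have shift : ∀ i ∈ Finset.range r.length,
      ∑ j ∈ Finset.range (r.getD i 0), ((j : ℤ) - ((i + 1 : ℕ) : ℤ))
        = ∑ j ∈ Finset.range (r.getD i 0), ((j : ℤ) - i) - r.getD i 0 := by
    intro i _
    simp only [Finset.sum_sub_distrib, Finset.sum_const, Finset.card_range, nsmul_eq_mul]
    push_cast
    ring
  unfold contentSum
  rw [List.length_cons, Finset.sum_range_succ']
  simp only [List.getD_cons_succ, List.getD_cons_zero, Nat.cast_zero, sub_zero]
  rw [Finset.sum_congr rfl shift, Finset.sum_sub_distrib, sum_range_length_getD, mul_add,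
    two_mul_sum_range_intCast]
  ring

lemma four_mul_sum_sub_sq_le_four_mul_contentSum_s8 {l : List ℕ} (hl : ∀ x ∈ l, 2 ≤ x) :
    4 * (l.sum : ℤ) - (l.sum : ℤ) ^ 2 ≤ 4 * contentSum l := by
  induction l with
  | nil => simp [contentSum]
  | cons x r ih =>
    have hx : (2 : ℤ) ≤ x := by exact_mod_cast hl x List.mem_cons_self
    have hr := ih fun y hy => hl y (List.mem_cons_of_mem x hy)
    have hcons := two_mul_contentSum_cons x r
    rw [List.sum_cons, Nat.cast_add]
    nlinarith [mul_nonneg (sub_nonneg.mpr hx) (by positivity : (0 : ℤ) ≤ 3 * x + 2 * r.sum)]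

lemma sq_lt_four_mul_contentSum_cons {n h : ℕ} {t : List ℕ} (ht : ∀ x ∈ t, 2 ≤ x)
    (hsum : h + t.sum = 2 * n) (hn : n < h) :
    (n : ℤ) ^ 2 < 4 * contentSum (h :: t) := by
  have hcons := two_mul_contentSum_cons h t
  have hrest := four_mul_sum_sub_sq_le_four_mul_contentSum_s8 ht
  have hsum' : (h : ℤ) + t.sum = 2 * n := by exact_mod_cast hsum
  have hn' : (n : ℤ) + 1 ≤ h := by exact_mod_cast hn
  nlinarith [mul_nonneg (by linarith : (0 : ℤ) ≤ h - n - 1) (by positivity : (0 : ℤ) ≤ h + 5 * n + 1)]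

lemma exists_sort_reverse_eq_cons_le {α : Type*} [LinearOrder α] {s : Multiset α} {a : α} (ha : a ∈ s) :
    ∃ h t, (s.sort (· ≤ ·)).reverse = h :: t ∧ a ≤ h := by
  have hmem : a ∈ (s.sort (· ≤ ·)).reverse := by simpa using ha
  have hsorted : (s.sort (· ≤ ·)).reverse.Pairwise (· ≥ ·) :=
    List.pairwise_reverse.mpr (Multiset.pairwise_sort s _)
  generalize (s.sort (· ≤ ·)).reverse = L at hmem hsorted
  cases L with
  | nil => simp at hmem
  | cons h t =>
    refine ⟨h, t, rfl, ?_⟩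
    rcases List.mem_cons.mp hmem with rfl | hat
    · exact le_rfl
    · exact List.rel_of_pairwise_cons hsorted hat

def doubledRows {n : ℕ} (μ : Nat.Partition n) : List ℕ :=
  ((μ.parts.map (fun a => 2 * a)).sort (· ≤ ·)).reverse

lemma sum_doubledRows {n : ℕ} (μ : Nat.Partition n) : (doubledRows μ).sum = 2 * n := by
  rw [doubledRows, List.sum_reverse, ← Multiset.sum_coe, Multiset.sort_eq,
    Multiset.sum_map_mul_left, Multiset.map_id', μ.parts_sum]

lemma two_le_of_mem_doubledRows {n : ℕ} {μ : Nat.Partition n} {x : ℕ} (hx : x ∈ doubledRows μ) :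
    2 ≤ x := by
  obtain ⟨b, hb, rfl⟩ := Multiset.mem_map.mp (by simpa [doubledRows] using hx)
  have := μ.parts_pos hb
  omega

/-- If `μ ⊢ n` has largest part exceeding `n/2`, then the content sum of the Young diagram
of `2μ` is strictly greater than `n²/4`. -/
theorem contentSum_gt_of_large_part (n : ℕ) (μ : Nat.Partition n)
    (h : ∃ a ∈ μ.parts, (n : ℚ) / 2 < (a : ℚ)) :
    ((n : ℚ) ^ 2) / 4
      < ((contentSum (((μ.parts.map (fun a => 2 * a)).sort (· ≤ ·)).reverse) : ℤ) : ℚ) := by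
  obtain ⟨a, ha, hna⟩ := h
  obtain ⟨hd, t, hrows, hahd⟩ :=
    exists_sort_reverse_eq_cons_le (Multiset.mem_map_of_mem (fun a => 2 * a) ha)
  change _ < ((contentSum (doubledRows μ) : ℤ) : ℚ)
  have hn : n < hd := by
    have : (n : ℚ) < 2 * a := by linarith
    have : n < 2 * a := by exact_mod_cast this
    omega
  have hsum : hd + t.sum = 2 * n := by
    rw [← List.sum_cons, ← hrows]
    exact sum_doubledRows μ
  have ht : ∀ x ∈ t, 2 ≤ x := fun x hx =>
    two_le_of_mem_doubledRows (hrows ▸ List.mem_cons_of_mem hd hx)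
  have key : ((n ^ 2 : ℤ) : ℚ) < ((4 * contentSum (doubledRows μ) : ℤ) : ℚ) := by
    rw [doubledRows, hrows]
    exact_mod_cast sq_lt_four_mul_contentSum_cons ht hsum hn
  push_cast at key
  linarith
end

section
/- For the hook partition μ = [n-ℓ, 1^ℓ] with 0 ≤ ℓ ≤ n-2, set v = binom(n,ℓ)·(2n-2ℓ-2)!!, a = binom(n-1,ℓ-1)·(2n-2ℓ-2)!!, and b = binom(n-2,ℓ)·(2n-2ℓ-4)!!. Then v - a + b = (2n-1)·(2n-4)(2n-6)···(2ℓ+2), i.e., v - a + b = (2n-1)·2^{n-ℓ-2}·(n-2)!/ℓ!. -/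
/-- For the hook partition `μ = [n-ℓ, 1^ℓ]` with `0 ≤ ℓ ≤ n-2`, setting
`v = C(n,ℓ)(2n-2ℓ-2)!!`, `a = C(n-1,ℓ-1)(2n-2ℓ-2)!!`, `b = C(n-2,ℓ)(2n-2ℓ-4)!!`
(where `(2m)!! = 2^m m!` and `C(n-1,-1) = 0`), one has
`v - a + b = (2n-1)·2^{n-ℓ-2}·(n-2)!/ℓ!`. -/
theorem hook_spectral_gap (n ℓ : ℕ) (h : ℓ + 2 ≤ n) :
    (Nat.choose n ℓ : ℚ) * (2 ^ (n - ℓ - 1) * ((n - ℓ - 1).factorial : ℚ))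
        - (if ℓ = 0 then 0 else (Nat.choose (n - 1) (ℓ - 1) : ℚ))
            * (2 ^ (n - ℓ - 1) * ((n - ℓ - 1).factorial : ℚ))
        + (Nat.choose (n - 2) ℓ : ℚ) * (2 ^ (n - ℓ - 2) * ((n - ℓ - 2).factorial : ℚ))
      = (2 * (n : ℚ) - 1) * 2 ^ (n - ℓ - 2) * ((n - 2).factorial : ℚ)
          / (ℓ.factorial : ℚ) := by
  obtain ⟨m, rfl⟩ : ∃ m, n = ℓ + m + 2 := ⟨n - ℓ - 2, by omega⟩
  rw [show ℓ + m + 2 - ℓ - 1 = m + 1 by omega,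
    show ℓ + m + 2 - ℓ - 2 = m by omega,
    show ℓ + m + 2 - 2 = ℓ + m by omega,
    show ℓ + m + 2 - 1 = ℓ + m + 1 by omega]
  have hmpos : ((m : ℕ).factorial : ℚ) ≠ 0 := by positivity
  have hm1 : ((m : ℚ) + 1) ≠ 0 := by positivity
  have hm2 : ((m : ℚ) + 2) ≠ 0 := by positivity
  rcases Nat.eq_zero_or_pos ℓ with hl | hl
  · subst hl
    simp only [if_pos rfl, Nat.zero_add, Nat.choose_self, Nat.choose_zero_right,
      Nat.factorial_zero, Nat.cast_one, Nat.factorial_succ]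
    push_cast
    ring
  · have hln : ℓ ≠ 0 := by omega
    rw [if_neg hln]
    obtain ⟨j, rfl⟩ : ∃ j, ℓ = j + 1 := ⟨ℓ - 1, by omega⟩
    rw [show j + 1 + m + 1 = j + m + 2 by omega,
      show j + 1 - 1 = j from rfl,
      show j + 1 + m + 2 = j + m + 3 by omega,
      show j + 1 + m = j + m + 1 by omega]
    have hc1 : ((j + m + 3).choose (j + 1) : ℚ) = ((j + m + 3).factorial : ℚ) /
        (((j + 1).factorial : ℚ) * ((m + 2).factorial : ℚ)) := by
      rw [Nat.cast_choose ℚ (show j + 1 ≤ j + m + 3 by omega),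
        show j + m + 3 - (j + 1) = m + 2 by omega]
    have hc2 : ((j + m + 2).choose j : ℚ) = ((j + m + 2).factorial : ℚ) /
        ((j.factorial : ℚ) * ((m + 2).factorial : ℚ)) := by
      rw [Nat.cast_choose ℚ (show j ≤ j + m + 2 by omega),
        show j + m + 2 - j = m + 2 by omega]
    have hc3 : ((j + m + 1).choose (j + 1) : ℚ) = ((j + m + 1).factorial : ℚ) /
        (((j + 1).factorial : ℚ) * ((m : ℕ).factorial : ℚ)) := by
      rw [Nat.cast_choose ℚ (show j + 1 ≤ j + m + 1 by omega),
        show j + m + 1 - (j + 1) = m by omega]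
    have hf1 : ((j + m + 3).factorial : ℚ)
        = ((j : ℚ) + m + 3) * ((j : ℚ) + m + 2) * ((j + m + 1).factorial : ℚ) := by
      rw [show j + m + 3 = (j + m + 2) + 1 from rfl, Nat.factorial_succ,
        show j + m + 2 = (j + m + 1) + 1 from rfl, Nat.factorial_succ]
      push_cast; ring
    have hf2 : ((j + m + 2).factorial : ℚ)
        = ((j : ℚ) + m + 2) * ((j + m + 1).factorial : ℚ) := by
      rw [show j + m + 2 = (j + m + 1) + 1 from rfl, Nat.factorial_succ]
      push_cast; ring
    have hf3 : ((m + 2).factorial : ℚ)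
        = ((m : ℚ) + 2) * ((m : ℚ) + 1) * ((m : ℕ).factorial : ℚ) := by
      rw [show m + 2 = (m + 1) + 1 from rfl, Nat.factorial_succ, Nat.factorial_succ]
      push_cast; ring
    have hf4 : ((m + 1).factorial : ℚ) = ((m : ℚ) + 1) * ((m : ℕ).factorial : ℚ) := by
      rw [Nat.factorial_succ]; push_cast; ring
    have hf5 : ((j + 1).factorial : ℚ) = ((j : ℚ) + 1) * (j.factorial : ℚ) := by
      rw [Nat.factorial_succ]; push_cast; ring
    have hj : (j.factorial : ℚ) ≠ 0 := by positivity
    have hjm : ((j + m + 1).factorial : ℚ) ≠ 0 := by positivity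
    have hj1 : ((j : ℚ) + 1) ≠ 0 := by positivity
    rw [hc1, hc2, hc3, hf1, hf2, hf3, hf4, hf5]
    push_cast
    field_simp
    ring
end
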